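/- The function (a,b) ↦ a·κ(a,b) is continuous and strictly concave on the set {(a,b) ∈ ℝ²: b > 0, a ≥ 1+b}, and is real-analytic on its interior {(a,b): b > 0, a > 1+b}. -/
import Mathlib


/-- The variational functional `f_{a,b}(δ,ε)` (with the convention `0 log 0 = 0`,
which holds automatically since `Real.log 0 = 0`). -/
noncomputable def fab (a b : ℝ) (p : ℝ × ℝ) : ℝ :=
  b * Real.log b - 2 * p.1 * Real.log p.1
    + ((a + 1 - b) / 2) * Real.log ((a + 1 - b) / 2)
    - ((a + 1 - b) / 2 - p.1) * Real.log ((a + 1 - b) / 2 - p.1)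
    - 2 * p.2 * Real.log p.2
    - (b - p.1 - p.2) * Real.log (b - p.1 - p.2)
    + ((a - 1 - b) / 2) * Real.log ((a - 1 - b) / 2)
    - ((a - 1 - b) / 2 - p.2) * Real.log ((a - 1 - b) / 2 - p.2)

/-- The domain `D_{a,b}` of `f_{a,b}`. -/
def Dab (a b : ℝ) : Set (ℝ × ℝ) :=
  {p | 0 ≤ p.1 ∧ 0 ≤ p.2 ∧ p.1 + p.2 ≤ b ∧ p.1 ≤ (a + 1 - b) / 2 ∧ p.2 ≤ (a - 1 - b) / 2}

/-- The entropy per step `κ(a,b) = (1/a) · sup_{(δ,ε) ∈ D_{a,b}} f_{a,b}(δ,ε)`. -/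
noncomputable def kappa (a b : ℝ) : ℝ := (1 / a) * sSup (fab a b '' Dab a b)

open Real

/-- tangent line inequality for `x log x` at `u`. -/
lemma tangent_ineq {u w : ℝ} (h : (0 < u ∧ 0 ≤ w) ∨ (u = 0 ∧ w = 0)) :
    w * Real.log u + (w - u) ≤ w * Real.log w := by
  rcases h with ⟨hu, hw⟩ | ⟨hu, hw⟩
  · rcases hw.eq_or_lt with hw0 | hw0
    · simp [← hw0]; linarith
    · have h1 : Real.log (u / w) ≤ u / w - 1 := Real.log_le_sub_one_of_pos (by positivity)
      rw [Real.log_div (ne_of_gt hu) (ne_of_gt hw0)] at h1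
      have h2 : w * (Real.log u - Real.log w) ≤ w * (u / w - 1) :=
        mul_le_mul_of_nonneg_left h1 hw0.le
      have h3 : w * (u / w - 1) = u - w := by field_simp
      nlinarith
  · simp [hu, hw]

/-- two-term log-sum inequality, with strictness criterion. -/
lemma logsum2 {a₁ b₁ a₂ b₂ : ℝ} (h₁ : 0 ≤ a₁) (h₁' : a₁ ≤ b₁) (h₂ : 0 ≤ a₂) (h₂' : a₂ ≤ b₂) :
    (a₁ + a₂) * Real.log (a₁ + a₂) - (a₁ + a₂) * Real.log (b₁ + b₂) ≤
      (a₁ * Real.log a₁ - a₁ * Real.log b₁) + (a₂ * Real.log a₂ - a₂ * Real.log b₂) ∧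
    (a₁ * b₂ ≠ a₂ * b₁ →
      (a₁ + a₂) * Real.log (a₁ + a₂) - (a₁ + a₂) * Real.log (b₁ + b₂) <
        (a₁ * Real.log a₁ - a₁ * Real.log b₁) + (a₂ * Real.log a₂ - a₂ * Real.log b₂)) := by
  have hb₁ : 0 ≤ b₁ := h₁.trans h₁'
  have hb₂ : 0 ≤ b₂ := h₂.trans h₂'
  rcases hb₁.eq_or_lt with hb₁0 | hb₁0
  · have ha₁0 : a₁ = 0 := le_antisymm (h₁'.trans hb₁0.ge) h₁
    constructor
    · simp [ha₁0, ← hb₁0]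
    · intro hc; exfalso; apply hc; rw [ha₁0, ← hb₁0]; ring
  rcases hb₂.eq_or_lt with hb₂0 | hb₂0
  · have ha₂0 : a₂ = 0 := le_antisymm (h₂'.trans hb₂0.ge) h₂
    constructor
    · simp [ha₂0, ← hb₂0]
    · intro hc; exfalso; apply hc; rw [ha₂0, ← hb₂0]; ring
  have hB : 0 < b₁ + b₂ := by linarith
  rcases h₁.eq_or_lt with ha₁0 | ha₁0
  · -- a₁ = 0
    have hlog : Real.log b₂ ≤ Real.log (b₁ + b₂) := Real.log_le_log hb₂0 (by linarith)
    constructor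
    · simp only [← ha₁0, zero_add, zero_mul, sub_zero]; nlinarith
    · intro hc
      have hb₁pos : 0 < b₁ ∧ 0 < a₂ := by
        constructor
        · exact hb₁0
        · rcases h₂.eq_or_lt with h | h
          · exfalso; apply hc; rw [← ha₁0, ← h]; ring
          · exact h
      have hlt : Real.log b₂ < Real.log (b₁ + b₂) := Real.log_lt_log hb₂0 (by linarith)
      simp only [← ha₁0, zero_add, zero_mul, sub_zero]
      nlinarith [hb₁pos.2]
  rcases h₂.eq_or_lt with ha₂0 | ha₂0
  · have hlog : Real.log b₁ ≤ Real.log (b₁ + b₂) := Real.log_le_log hb₁0 (by linarith)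
    constructor
    · simp only [← ha₂0, add_zero, zero_mul, sub_zero]; nlinarith
    · intro hc
      have ha₁pos : 0 < a₁ := ha₁0
      have hlt : Real.log b₁ < Real.log (b₁ + b₂) := Real.log_lt_log hb₁0 (by linarith)
      simp only [← ha₂0, add_zero, zero_mul, sub_zero]
      nlinarith
  -- main case : all positive
  have hA : 0 < a₁ + a₂ := by linarith
  set t₁ := b₁ * (a₁ + a₂) / (a₁ * (b₁ + b₂)) with ht₁
  set t₂ := b₂ * (a₁ + a₂) / (a₂ * (b₁ + b₂)) with ht₂
  have ht₁pos : 0 < t₁ := by positivity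
  have ht₂pos : 0 < t₂ := by positivity
  have e₁ : Real.log t₁ = Real.log b₁ + Real.log (a₁ + a₂) - Real.log a₁ - Real.log (b₁ + b₂) := by
    rw [ht₁, Real.log_div (by positivity) (by positivity), Real.log_mul (by positivity) (by positivity),
      Real.log_mul (by positivity) (by positivity)]; ring
  have e₂ : Real.log t₂ = Real.log b₂ + Real.log (a₁ + a₂) - Real.log a₂ - Real.log (b₁ + b₂) := by
    rw [ht₂, Real.log_div (by positivity) (by positivity), Real.log_mul (by positivity) (by positivity),
      Real.log_mul (by positivity) (by positivity)]; ring
  have key : a₁ * (t₁ - 1) + a₂ * (t₂ - 1) = 0 := by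
    rw [ht₁, ht₂]; field_simp; ring
  have i₁ : Real.log t₁ ≤ t₁ - 1 := Real.log_le_sub_one_of_pos ht₁pos
  have i₂ : Real.log t₂ ≤ t₂ - 1 := Real.log_le_sub_one_of_pos ht₂pos
  have m₁ : a₁ * Real.log t₁ ≤ a₁ * (t₁ - 1) := mul_le_mul_of_nonneg_left i₁ ha₁0.le
  have m₂ : a₂ * Real.log t₂ ≤ a₂ * (t₂ - 1) := mul_le_mul_of_nonneg_left i₂ ha₂0.le
  have E₁ : a₁ * Real.log t₁ = a₁ * Real.log b₁ + a₁ * Real.log (a₁ + a₂)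
      - a₁ * Real.log a₁ - a₁ * Real.log (b₁ + b₂) := by rw [e₁]; ring
  have E₂ : a₂ * Real.log t₂ = a₂ * Real.log b₂ + a₂ * Real.log (a₁ + a₂)
      - a₂ * Real.log a₂ - a₂ * Real.log (b₁ + b₂) := by rw [e₂]; ring
  constructor
  · linarith [m₁, m₂, key, E₁, E₂]
  · intro hc
    have ht₁ne : t₁ ≠ 1 := by
      intro h1
      apply hc
      have h2 : b₁ * (a₁ + a₂) = a₁ * (b₁ + b₂) := by
        rw [ht₁, div_eq_one_iff_eq (by positivity)] at h1
        exact h1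
      nlinarith
    have i₁' : Real.log t₁ < t₁ - 1 := Real.log_lt_sub_one_of_pos ht₁pos ht₁ne
    have m₁' : a₁ * Real.log t₁ < a₁ * (t₁ - 1) :=
      (mul_lt_mul_iff_right₀ ha₁0).2 i₁'
    linarith [m₁', m₂, key, E₁, E₂]

/-- binomial-entropy block. -/
noncomputable def H2 (x y : ℝ) : ℝ :=
  x * Real.log x - y * Real.log y - (x - y) * Real.log (x - y)

lemma mul_log_homog {t x : ℝ} (ht : 0 ≤ t) :
    (t * x) * Real.log (t * x) = t * (x * Real.log x) + (t * x) * Real.log t := by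
  rcases ht.eq_or_lt with h | h
  · simp [← h]
  rcases eq_or_ne x 0 with hx | hx
  · simp [hx]
  · rw [Real.log_mul (ne_of_gt h) hx]; ring

lemma H2_homog {t x y : ℝ} (ht : 0 ≤ t) : H2 (t * x) (t * y) = t * H2 x y := by
  unfold H2
  have h1 := mul_log_homog (x := x) ht
  have h2 := mul_log_homog (x := y) ht
  have h3 := mul_log_homog (x := x - y) ht
  have hxy : t * x - t * y = t * (x - y) := by ring
  rw [hxy, h1, h2, h3]; ring

lemma H2_superadd {x₁ y₁ x₂ y₂ : ℝ} (hy₁ : 0 ≤ y₁) (hxy₁ : y₁ ≤ x₁)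
    (hy₂ : 0 ≤ y₂) (hxy₂ : y₂ ≤ x₂) :
    H2 x₁ y₁ + H2 x₂ y₂ ≤ H2 (x₁ + x₂) (y₁ + y₂) ∧
    (x₁ * y₂ ≠ y₁ * x₂ → H2 x₁ y₁ + H2 x₂ y₂ < H2 (x₁ + x₂) (y₁ + y₂)) := by
  have L1 := logsum2 hy₁ hxy₁ hy₂ hxy₂
  have L2 := logsum2 (a₁ := x₁ - y₁) (b₁ := x₁) (a₂ := x₂ - y₂) (b₂ := x₂)
    (by linarith) (by linarith) (by linarith) (by linarith)
  have hd : x₁ + x₂ - (y₁ + y₂) = (x₁ - y₁) + (x₂ - y₂) := by ring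
  constructor
  · unfold H2
    rw [hd]
    linarith [L1.1, L2.1]
  · intro hc
    unfold H2
    rw [hd]
    have hc' : y₁ * x₂ ≠ y₂ * x₁ := by
      intro h; apply hc; linarith [h]
    linarith [L1.2 hc', L2.1]

/-- weighted two-point concavity inequality for `H2`, with strictness. -/
lemma H2_concave {x₁ y₁ x₂ y₂ w₁ w₂ : ℝ} (hy₁ : 0 ≤ y₁) (hxy₁ : y₁ ≤ x₁)
    (hy₂ : 0 ≤ y₂) (hxy₂ : y₂ ≤ x₂) (hw₁ : 0 < w₁) (hw₂ : 0 < w₂) :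
    w₁ * H2 x₁ y₁ + w₂ * H2 x₂ y₂ ≤ H2 (w₁ * x₁ + w₂ * x₂) (w₁ * y₁ + w₂ * y₂) ∧
    (x₁ * y₂ ≠ y₁ * x₂ →
      w₁ * H2 x₁ y₁ + w₂ * H2 x₂ y₂ < H2 (w₁ * x₁ + w₂ * x₂) (w₁ * y₁ + w₂ * y₂)) := by
  have hs := H2_superadd (x₁ := w₁ * x₁) (y₁ := w₁ * y₁) (x₂ := w₂ * x₂) (y₂ := w₂ * y₂)
    (by positivity) (by nlinarith) (by positivity) (by nlinarith)
  rw [H2_homog hw₁.le, H2_homog hw₂.le] at hs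
  refine ⟨hs.1, fun hc => hs.2 ?_⟩
  intro h; apply hc
  have : w₁ * w₂ * (x₁ * y₂) = w₁ * w₂ * (y₁ * x₂) := by linarith [h]
  have hww : 0 < w₁ * w₂ := by positivity
  exact mul_left_cancel₀ (ne_of_gt hww) this

noncomputable def Rab (a b : ℝ) : ℝ :=
  b ^ 2 / ((a - b) + Real.sqrt ((a - b) ^ 2 + b ^ 2 - 1))

noncomputable def dstar (a b : ℝ) : ℝ :=
  (Real.sqrt ((Rab a b) ^ 2 + 4 * ((a + 1 - b) / 2) * Rab a b) - Rab a b) / 2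

noncomputable def estar (a b : ℝ) : ℝ :=
  (Real.sqrt ((Rab a b) ^ 2 + 4 * ((a - 1 - b) / 2) * Rab a b) - Rab a b) / 2

/-- The collection of facts about the explicit maximizer. -/
structure PF (a b : ℝ) : Prop where
  hδ : 0 < dstar a b
  hcδ : 0 < (a + 1 - b) / 2 - dstar a b
  hε : 0 ≤ estar a b
  hdε : 0 ≤ (a - 1 - b) / 2 - estar a b
  hεiff : 0 < estar a b ↔ 0 < (a - 1 - b) / 2
  hR : 0 < Rab a b
  hr : b - dstar a b - estar a b = Rab a b
  hstatδ : (dstar a b) ^ 2 = ((a + 1 - b) / 2 - dstar a b) * Rab a b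
  hstatε : (estar a b) ^ 2 = ((a - 1 - b) / 2 - estar a b) * Rab a b
  hdεpos : 0 < estar a b → 0 < (a - 1 - b) / 2 - estar a b

lemma le_of_sq_le_sq' {x y : ℝ} (hy : 0 ≤ y) (hx : 0 ≤ x) (h : x ^ 2 ≤ y ^ 2) : x ≤ y := by
  nlinarith

lemma lt_of_sq_lt_sq' {x y : ℝ} (hy : 0 ≤ y) (hx : 0 ≤ x) (h : x ^ 2 < y ^ 2) : x < y := by
  nlinarith

lemma helperR2w {R w s b : ℝ} (hRsw : R * (s + w) = b ^ 2) (hw2 : w ^ 2 = s ^ 2 + b ^ 2 - 1)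
    (hs : 1 ≤ s) (hwnn : 0 ≤ w) (hb : 0 < b) (hsw : 0 < s + w) : R ≤ 2 * w := by
  nlinarith [mul_nonneg hwnn (by linarith : (0:ℝ) ≤ s)]

lemma helperle {R w s b c d : ℝ} (hRsw : R * (s + w) = b ^ 2) (hcd : c + d = s)
    (hR : 0 < R) (hR2w : R ≤ 2 * w) : R ^ 2 + 4 * c * R + (R ^ 2 + 4 * d * R) ≤ 4 * b ^ 2 := by
  nlinarith [mul_le_mul_of_nonneg_left hR2w hR.le]

set_option maxHeartbeats 1000000 in
lemma pf {a b : ℝ} (hb : 0 < b) (hab : 1 + b ≤ a) : PF a b := by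
  have hs : 1 ≤ a - b := by linarith
  have hQ : 0 < (a - b) ^ 2 + b ^ 2 - 1 := by nlinarith
  obtain ⟨w, hwdef⟩ : ∃ w, w = Real.sqrt ((a - b) ^ 2 + b ^ 2 - 1) := ⟨_, rfl⟩
  have hw2 : w ^ 2 = (a - b) ^ 2 + b ^ 2 - 1 := by rw [hwdef]; exact Real.sq_sqrt hQ.le
  have hwnn : 0 ≤ w := by rw [hwdef]; exact Real.sqrt_nonneg _
  have hwb : b ≤ w := le_of_sq_le_sq' hwnn hb.le (by nlinarith)
  have hw : 0 < w := lt_of_lt_of_le hb hwb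
  have hsw : 0 < (a - b) + w := by linarith
  obtain ⟨R, hRdef⟩ : ∃ R, R = Rab a b := ⟨_, rfl⟩
  have hRw : R = b ^ 2 / ((a - b) + w) := by rw [hRdef, Rab, ← hwdef]
  have hR : 0 < R := by rw [hRw]; positivity
  have hRsw : R * ((a - b) + w) = b ^ 2 := by
    rw [hRw]; field_simp
  have hF2 : (1 - b ^ 2) * R ^ 2 - 2 * (a - b) * b ^ 2 * R + b ^ 4 = 0 := by
    linear_combination (R ^ 2) * hw2 - (b ^ 2 - R * (a - b) + R * w) * hRsw
  obtain ⟨c, hcdef⟩ : ∃ c, c = (a + 1 - b) / 2 := ⟨_, rfl⟩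
  obtain ⟨d, hddef⟩ : ∃ d, d = (a - 1 - b) / 2 := ⟨_, rfl⟩
  have hc1 : 1 ≤ c := by rw [hcdef]; linarith
  have hd0 : 0 ≤ d := by rw [hddef]; linarith
  obtain ⟨X, hXdef⟩ : ∃ X, X = R ^ 2 + 4 * c * R := ⟨_, rfl⟩
  obtain ⟨Y, hYdef⟩ : ∃ Y, Y = R ^ 2 + 4 * d * R := ⟨_, rfl⟩
  have hXpos : 0 < X := by
    rw [hXdef]
    have h1 : 0 < 4 * c * R := by positivity
    positivity
  have hYnn : 0 ≤ Y := by
    rw [hYdef]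
    have h1 : 0 ≤ 4 * d * R := by positivity
    positivity
  obtain ⟨sX, hsXdef⟩ : ∃ sX, sX = Real.sqrt X := ⟨_, rfl⟩
  obtain ⟨sY, hsYdef⟩ : ∃ sY, sY = Real.sqrt Y := ⟨_, rfl⟩
  have hsX : sX ^ 2 = X := by rw [hsXdef]; exact Real.sq_sqrt hXpos.le
  have hsY : sY ^ 2 = Y := by rw [hsYdef]; exact Real.sq_sqrt hYnn
  have hsXnn : 0 ≤ sX := by rw [hsXdef]; exact Real.sqrt_nonneg _
  have hsYnn : 0 ≤ sY := by rw [hsYdef]; exact Real.sqrt_nonneg _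
  have hδdef : dstar a b = (sX - R) / 2 := by
    rw [hsXdef, hXdef, hcdef, hRdef, dstar]
  have hεdef : estar a b = (sY - R) / 2 := by
    rw [hsYdef, hYdef, hddef, hRdef, estar]
  have hδpos : 0 < dstar a b := by
    rw [hδdef]
    have h2 : R < sX := by
      refine lt_of_sq_lt_sq' hsXnn hR.le ?_
      rw [hsX, hXdef]
      have h1 : 0 < 4 * c * R := by positivity
      linarith
    linarith
  have hstatδ : (dstar a b) ^ 2 = (c - dstar a b) * R := by
    rw [hδdef]; linear_combination (1 / 4 : ℝ) * hsX + (1 / 4 : ℝ) * hXdef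
  have hcδ : 0 < c - dstar a b := by
    have h2 : 0 < (c - dstar a b) * R := by rw [← hstatδ]; positivity
    rcases mul_pos_iff.mp h2 with ⟨h3, _⟩ | ⟨_, h4⟩
    · exact h3
    · linarith
  have hεnn : 0 ≤ estar a b := by
    rw [hεdef]
    have h2 : R ≤ sY := by
      refine le_of_sq_le_sq' hsYnn hR.le ?_
      rw [hsY, hYdef]
      have h1 : 0 ≤ 4 * d * R := by positivity
      linarith
    linarith
  have hstatε : (estar a b) ^ 2 = (d - estar a b) * R := by
    rw [hεdef]; linear_combination (1 / 4 : ℝ) * hsY + (1 / 4 : ℝ) * hYdef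
  have hdε : 0 ≤ d - estar a b := by
    by_contra hcon
    push_neg at hcon
    have h2 : (d - estar a b) * R < 0 := mul_neg_of_neg_of_pos hcon hR
    have h3 := sq_nonneg (estar a b)
    rw [hstatε] at h3
    linarith
  have hεiff : 0 < estar a b ↔ 0 < d := by
    constructor
    · intro h
      by_contra hdneg
      have hd0' : d = 0 := le_antisymm (not_lt.1 hdneg) hd0
      have hYR : Y = R ^ 2 := by rw [hYdef, hd0']; ring
      have hsYR : sY = R := by rw [hsYdef, hYR, Real.sqrt_sq hR.le]
      rw [hεdef, hsYR] at h
      linarith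
    · intro h
      rw [hεdef]
      have h2 : R < sY := by
        refine lt_of_sq_lt_sq' hsYnn hR.le ?_
        rw [hsY, hYdef]
        have h1 : 0 < 4 * d * R := by positivity
        linarith
      linarith
  have hdεpos : 0 < estar a b → 0 < d - estar a b := by
    intro h
    have h2 : 0 < (d - estar a b) * R := by rw [← hstatε]; positivity
    rcases mul_pos_iff.mp h2 with ⟨h3, _⟩ | ⟨_, h4⟩
    · exact h3
    · linarith
  have hXY : 4 * (X * Y) = (4 * b ^ 2 - X - Y) ^ 2 := by
    have e1 : X = R ^ 2 + 4 * ((a + 1 - b) / 2) * R := by rw [hXdef, hcdef]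
    have e2 : Y = R ^ 2 + 4 * ((a - 1 - b) / 2) * R := by rw [hYdef, hddef]
    rw [e1, e2]
    linear_combination (-16 : ℝ) * hF2
  have hR2w : R ≤ 2 * w := helperR2w hRsw hw2 hs hwnn hb hsw
  have hcd : c + d = a - b := by rw [hcdef, hddef]; ring
  have hle : X + Y ≤ 4 * b ^ 2 := by
    rw [hXdef, hYdef]
    exact helperle hRsw hcd hR hR2w
  have hsqrtmul : sX * sY = (4 * b ^ 2 - X - Y) / 2 := by
    rw [hsXdef, hsYdef, ← Real.sqrt_mul hXpos.le]
    have h5 : X * Y = ((4 * b ^ 2 - X - Y) / 2) ^ 2 := by linear_combination (1 / 4 : ℝ) * hXY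
    rw [h5, Real.sqrt_sq (by linarith)]
  have h2b : (sX + sY) ^ 2 = (2 * b) ^ 2 := by
    linear_combination hsX + hsY + 2 * hsqrtmul
  have hsum : sX + sY = 2 * b := by
    rcases sq_eq_sq_iff_eq_or_eq_neg.1 h2b with h | h
    · exact h
    · exfalso; linarith
  have hr : b - dstar a b - estar a b = R := by
    rw [hδdef, hεdef]; linarith
  rw [hRdef] at hr
  rw [hcdef] at hstatδ hcδ
  rw [hddef] at hstatε hdε hεiff hdεpos
  rw [hRdef] at hstatδ hstatε
  have hR' : 0 < Rab a b := by rw [← hRdef]; exact hR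
  exact ⟨hδpos, hcδ, hεnn, hdε, hεiff, hR', hr, hstatδ, hstatε, hdεpos⟩

set_option maxHeartbeats 1000000 in
/-- `(dstar, estar)` is the maximizer of `fab a b` on `Dab a b`. -/
lemma fab_le {a b : ℝ} (hb : 0 < b) (hab : 1 + b ≤ a) {q : ℝ × ℝ} (hq : q ∈ Dab a b) :
    fab a b q ≤ fab a b (dstar a b, estar a b) := by
  obtain ⟨hq1, hq2, hq3, hq4, hq5⟩ := hq
  have P := pf hb hab
  have hupos : 0 < b - dstar a b - estar a b := by rw [P.hr]; exact P.hR
  have hB1 : 2 * Real.log (dstar a b) =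
      Real.log ((a + 1 - b) / 2 - dstar a b) + Real.log (b - dstar a b - estar a b) := by
    have h1 := congrArg Real.log P.hstatδ
    rw [Real.log_pow, Real.log_mul (ne_of_gt P.hcδ) (ne_of_gt P.hR)] at h1
    rw [← P.hr] at h1
    push_cast at h1
    linarith
  rcases lt_or_ge 0 (estar a b) with hε | hε
  · -- interior case : estar > 0
    have hdε : 0 < (a - 1 - b) / 2 - estar a b := P.hdεpos hε
    have hB2 : 2 * Real.log (estar a b) =
        Real.log (b - dstar a b - estar a b) + Real.log ((a - 1 - b) / 2 - estar a b) := by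
      have h1 := congrArg Real.log P.hstatε
      rw [Real.log_pow, Real.log_mul (ne_of_gt hdε) (ne_of_gt P.hR)] at h1
      rw [← P.hr] at h1
      push_cast at h1
      linarith
    have h1 := tangent_ineq (u := dstar a b) (w := q.1) (Or.inl ⟨P.hδ, hq1⟩)
    have h2 := tangent_ineq (u := (a + 1 - b) / 2 - dstar a b) (w := (a + 1 - b) / 2 - q.1)
      (Or.inl ⟨P.hcδ, by linarith⟩)
    have h3 := tangent_ineq (u := estar a b) (w := q.2) (Or.inl ⟨hε, hq2⟩)
    have h4 := tangent_ineq (u := b - dstar a b - estar a b) (w := b - q.1 - q.2)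
      (Or.inl ⟨hupos, by linarith⟩)
    have h5 := tangent_ineq (u := (a - 1 - b) / 2 - estar a b) (w := (a - 1 - b) / 2 - q.2)
      (Or.inl ⟨hdε, by linarith⟩)
    have hZ : 2 * (q.1 * Real.log (dstar a b) + (q.1 - dstar a b))
        + (((a + 1 - b) / 2 - q.1) * Real.log ((a + 1 - b) / 2 - dstar a b)
            + (((a + 1 - b) / 2 - q.1) - ((a + 1 - b) / 2 - dstar a b)))
        + 2 * (q.2 * Real.log (estar a b) + (q.2 - estar a b))
        + ((b - q.1 - q.2) * Real.log (b - dstar a b - estar a b)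
            + ((b - q.1 - q.2) - (b - dstar a b - estar a b)))
        + (((a - 1 - b) / 2 - q.2) * Real.log ((a - 1 - b) / 2 - estar a b)
            + (((a - 1 - b) / 2 - q.2) - ((a - 1 - b) / 2 - estar a b)))
        = 2 * (dstar a b * Real.log (dstar a b))
        + ((a + 1 - b) / 2 - dstar a b) * Real.log ((a + 1 - b) / 2 - dstar a b)
        + 2 * (estar a b * Real.log (estar a b))
        + (b - dstar a b - estar a b) * Real.log (b - dstar a b - estar a b)
        + ((a - 1 - b) / 2 - estar a b) * Real.log ((a - 1 - b) / 2 - estar a b) := by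
      linear_combination (q.1 - dstar a b) * hB1 + (q.2 - estar a b) * hB2
    simp only [fab]
    linarith [h1, h2, h3, h4, h5, hZ]
  · -- boundary case : estar = 0, d = 0, q.2 = 0
    have hε0 : estar a b = 0 := le_antisymm (not_lt.1 (by simpa using hε.not_gt)) P.hε
    have hd0 : (a - 1 - b) / 2 = 0 := by
      have h1 : ¬ 0 < (a - 1 - b) / 2 := fun h => (not_lt.2 hε) (P.hεiff.2 h)
      have h2 : 0 ≤ (a - 1 - b) / 2 := by linarith
      linarith [not_lt.1 h1]
    have hq20 : q.2 = 0 := le_antisymm (hd0 ▸ hq5) hq2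
    have h1 := tangent_ineq (u := dstar a b) (w := q.1) (Or.inl ⟨P.hδ, hq1⟩)
    have h2 := tangent_ineq (u := (a + 1 - b) / 2 - dstar a b) (w := (a + 1 - b) / 2 - q.1)
      (Or.inl ⟨P.hcδ, by linarith⟩)
    have h4 := tangent_ineq (u := b - dstar a b - estar a b) (w := b - q.1 - q.2)
      (Or.inl ⟨hupos, by linarith⟩)
    have hZ : 2 * (q.1 * Real.log (dstar a b) + (q.1 - dstar a b))
        + (((a + 1 - b) / 2 - q.1) * Real.log ((a + 1 - b) / 2 - dstar a b)
            + (((a + 1 - b) / 2 - q.1) - ((a + 1 - b) / 2 - dstar a b)))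
        + ((b - q.1 - q.2) * Real.log (b - dstar a b - estar a b)
            + ((b - q.1 - q.2) - (b - dstar a b - estar a b)))
        = 2 * (dstar a b * Real.log (dstar a b))
        + ((a + 1 - b) / 2 - dstar a b) * Real.log ((a + 1 - b) / 2 - dstar a b)
        + (b - dstar a b - estar a b) * Real.log (b - dstar a b - estar a b) := by
      have heq : q.2 = estar a b := by rw [hε0, hq20]
      linear_combination (q.1 - dstar a b) * hB1
        - (Real.log (b - dstar a b - estar a b) + 1) * heq
    rw [hq20, hε0] at h4 hZ
    simp only [sub_zero] at h4 hZ
    simp only [fab]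
    rw [hq20, hε0]
    simp only [Real.log_zero, mul_zero, zero_mul, sub_zero]
    linarith [h1, h2, h4, hZ]

lemma pstar_mem {a b : ℝ} (hb : 0 < b) (hab : 1 + b ≤ a) :
    (dstar a b, estar a b) ∈ Dab a b := by
  have P := pf hb hab
  refine ⟨P.hδ.le, P.hε, ?_, by linarith [P.hcδ], by linarith [P.hdε]⟩
  have h1 := P.hr
  have h2 := P.hR
  simp only [Prod.fst, Prod.snd]
  linarith

lemma sSup_fab {a b : ℝ} (hb : 0 < b) (hab : 1 + b ≤ a) :
    sSup (fab a b '' Dab a b) = fab a b (dstar a b, estar a b) := by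
  refine IsGreatest.csSup_eq ⟨⟨_, pstar_mem hb hab, rfl⟩, ?_⟩
  rintro y ⟨q, hq, rfl⟩
  exact fab_le hb hab hq

lemma fab_blocks (a b : ℝ) (p : ℝ × ℝ) :
    fab a b p = H2 b p.1 + H2 (b - p.1) p.2 + H2 ((a + 1 - b) / 2) p.1
      + H2 ((a - 1 - b) / 2) p.2 := by
  simp only [fab, H2]
  ring

lemma crosses_aux {b₁ δ₁ ε₁ c₁ d₁ b₂ δ₂ ε₂ c₂ d₂ : ℝ}
    (hb₁ : 0 < b₁) (hδ₁ : 0 < δ₁) (hr₁ : 0 < b₁ - δ₁ - ε₁)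
    (hε₁ : 0 ≤ ε₁) (hd₁ : 0 ≤ d₁) (hεiff₁ : 0 < ε₁ ↔ 0 < d₁) (hcd₁ : c₁ = d₁ + 1)
    (hb₂ : 0 < b₂) (hδ₂ : 0 < δ₂) (hr₂ : 0 < b₂ - δ₂ - ε₂)
    (hε₂ : 0 ≤ ε₂) (hd₂ : 0 ≤ d₂) (hεiff₂ : 0 < ε₂ ↔ 0 < d₂) (hcd₂ : c₂ = d₂ + 1)
    (h1 : b₁ * δ₂ = δ₁ * b₂) (h2 : (b₁ - δ₁) * ε₂ = ε₁ * (b₂ - δ₂))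
    (h3 : c₁ * δ₂ = δ₁ * c₂) (h4 : d₁ * ε₂ = ε₁ * d₂) :
    b₁ = b₂ ∧ c₁ = c₂ := by
  have hbδ₁ : 0 < b₁ - δ₁ := by linarith
  have hbδ₂ : 0 < b₂ - δ₂ := by linarith
  have hcb : c₁ * b₂ = c₂ * b₁ := by
    have h5 : δ₁ * (c₁ * b₂ - c₂ * b₁) = 0 := by linear_combination b₁ * h3 - c₁ * h1
    rcases mul_eq_zero.1 h5 with h | h
    · exact absurd h (ne_of_gt hδ₁)
    · linarith
  by_cases he₁ : 0 < ε₁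
  · by_cases he₂ : 0 < ε₂
    · -- both interior
      have hd₁' : 0 < d₁ := hεiff₁.1 he₁
      have hstar : (b₁ - δ₁) * d₂ = (b₂ - δ₂) * d₁ := by
        have h5 : ε₁ * ((b₁ - δ₁) * d₂ - (b₂ - δ₂) * d₁) = 0 := by
          linear_combination d₁ * h2 - (b₁ - δ₁) * h4
        rcases mul_eq_zero.1 h5 with h | h
        · exact absurd h (ne_of_gt he₁)
        · linarith
      have hdb : d₁ * b₂ = d₂ * b₁ := by
        have h5 : (b₁ - δ₁) * (d₁ * b₂ - d₂ * b₁) = 0 := by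
          linear_combination (-b₁) * hstar + d₁ * h1
        rcases mul_eq_zero.1 h5 with h | h
        · exact absurd h (ne_of_gt hbδ₁)
        · linarith
      have hbb : b₁ = b₂ := by
        linear_combination -hcb + hdb + b₂ * hcd₁ - b₁ * hcd₂
      refine ⟨hbb, ?_⟩
      have := hcb
      rw [← hbb] at this
      exact mul_right_cancel₀ (ne_of_gt hb₁) this
  -- case ε₂ = 0
    · have he₂0 : ε₂ = 0 := le_antisymm (not_lt.1 he₂) hε₂
      rw [he₂0] at h2
      have h5 : ε₁ * (b₂ - δ₂) = 0 := by linarith [h2]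
      rcases mul_eq_zero.1 h5 with h | h
      · exact absurd h (ne_of_gt he₁)
      · linarith
  · -- ε₁ = 0 hence d₁ = 0
    have he₁0 : ε₁ = 0 := le_antisymm (not_lt.1 he₁) hε₁
    have hd₁0 : d₁ = 0 := by
      rcases hd₁.eq_or_lt with h | h
      · exact h.symm
      · exact absurd (hεiff₁.2 h) he₁
    have he₂0 : ε₂ = 0 := by
      rw [he₁0] at h2
      have h5 : (b₁ - δ₁) * ε₂ = 0 := by linarith [h2]
      rcases mul_eq_zero.1 h5 with h | h
      · exact absurd h (ne_of_gt hbδ₁)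
      · exact h
    have hd₂0 : d₂ = 0 := by
      rcases hd₂.eq_or_lt with h | h
      · exact h.symm
      · exact absurd (hεiff₂.2 h) (by rw [he₂0]; exact lt_irrefl 0)
    have hc₁1 : c₁ = 1 := by rw [hcd₁, hd₁0]; ring
    have hc₂1 : c₂ = 1 := by rw [hcd₂, hd₂0]; ring
    constructor
    · rw [hc₁1, hc₂1] at hcb; linarith
    · rw [hc₁1, hc₂1]

/-- The explicit formula for `a·κ(a,b)`. -/
noncomputable def G (p : ℝ × ℝ) : ℝ := fab p.1 p.2 (dstar p.1 p.2, estar p.1 p.2)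

set_option maxHeartbeats 1000000 in
lemma G_strict {a₁ b₁ a₂ b₂ w₁ w₂ : ℝ} (hb₁ : 0 < b₁) (hab₁ : 1 + b₁ ≤ a₁)
    (hb₂ : 0 < b₂) (hab₂ : 1 + b₂ ≤ a₂) (hne : ¬(a₁ = a₂ ∧ b₁ = b₂))
    (hw₁ : 0 < w₁) (hw₂ : 0 < w₂) (hw : w₁ + w₂ = 1) :
    w₁ * G (a₁, b₁) + w₂ * G (a₂, b₂) < G (w₁ * a₁ + w₂ * a₂, w₁ * b₁ + w₂ * b₂) := by
  have P₁ := pf hb₁ hab₁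
  have P₂ := pf hb₂ hab₂
  have hr₁ : 0 < b₁ - dstar a₁ b₁ - estar a₁ b₁ := by rw [P₁.hr]; exact P₁.hR
  have hr₂ : 0 < b₂ - dstar a₂ b₂ - estar a₂ b₂ := by rw [P₂.hr]; exact P₂.hR
  have hbm : 0 < w₁ * b₁ + w₂ * b₂ := by positivity
  have habm : 1 + (w₁ * b₁ + w₂ * b₂) ≤ w₁ * a₁ + w₂ * a₂ := by
    nlinarith [mul_le_mul_of_nonneg_left hab₁ hw₁.le, mul_le_mul_of_nonneg_left hab₂ hw₂.le]
  -- the convex combination of the two maximizers lies in the mid domain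
  have hd₁ : 0 ≤ (a₁ - 1 - b₁) / 2 := by linarith
  have hd₂ : 0 ≤ (a₂ - 1 - b₂) / 2 := by linarith
  have hmem : ((w₁ * dstar a₁ b₁ + w₂ * dstar a₂ b₂, w₁ * estar a₁ b₁ + w₂ * estar a₂ b₂) : ℝ × ℝ)
      ∈ Dab (w₁ * a₁ + w₂ * a₂) (w₁ * b₁ + w₂ * b₂) := by
    refine ⟨?_, ?_, ?_, ?_, ?_⟩
    · simp only
      linarith [mul_nonneg hw₁.le P₁.hδ.le, mul_nonneg hw₂.le P₂.hδ.le]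
    · simp only
      linarith [mul_nonneg hw₁.le P₁.hε, mul_nonneg hw₂.le P₂.hε]
    · simp only
      nlinarith [mul_le_mul_of_nonneg_left (le_of_lt hr₁) hw₁.le,
        mul_le_mul_of_nonneg_left (le_of_lt hr₂) hw₂.le]
    · simp only
      have e1 : (w₁ * a₁ + w₂ * a₂ + 1 - (w₁ * b₁ + w₂ * b₂)) / 2
          = w₁ * ((a₁ + 1 - b₁) / 2) + w₂ * ((a₂ + 1 - b₂) / 2) := by
        rw [show w₂ = 1 - w₁ from by linarith]; ring
      rw [e1]
      nlinarith [mul_le_mul_of_nonneg_left (le_of_lt P₁.hcδ) hw₁.le,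
        mul_le_mul_of_nonneg_left (le_of_lt P₂.hcδ) hw₂.le]
    · simp only
      have e1 : (w₁ * a₁ + w₂ * a₂ - 1 - (w₁ * b₁ + w₂ * b₂)) / 2
          = w₁ * ((a₁ - 1 - b₁) / 2) + w₂ * ((a₂ - 1 - b₂) / 2) := by
        rw [show w₂ = 1 - w₁ from by linarith]; ring
      rw [e1]
      nlinarith [mul_le_mul_of_nonneg_left P₁.hdε hw₁.le,
        mul_le_mul_of_nonneg_left P₂.hdε hw₂.le]
  -- a strict block exists
  have hcross : b₁ * dstar a₂ b₂ ≠ dstar a₁ b₁ * b₂ ∨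
      (b₁ - dstar a₁ b₁) * estar a₂ b₂ ≠ estar a₁ b₁ * (b₂ - dstar a₂ b₂) ∨
      ((a₁ + 1 - b₁) / 2) * dstar a₂ b₂ ≠ dstar a₁ b₁ * ((a₂ + 1 - b₂) / 2) ∨
      ((a₁ - 1 - b₁) / 2) * estar a₂ b₂ ≠ estar a₁ b₁ * ((a₂ - 1 - b₂) / 2) := by
    by_contra hc
    push_neg at hc
    obtain ⟨h1, h2, h3, h4⟩ := hc
    have key := crosses_aux hb₁ P₁.hδ hr₁ P₁.hε hd₁ P₁.hεiff (by ring)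
      hb₂ P₂.hδ hr₂ P₂.hε hd₂ P₂.hεiff (by ring) h1 h2 h3 h4
    apply hne
    have hb12 : b₁ = b₂ := key.1
    have ha12 : a₁ = a₂ := by
      have := key.2
      rw [hb12] at this
      linarith
    exact ⟨ha12, hb12⟩
  -- block inequalities
  have B1 := H2_concave (x₁ := b₁) (y₁ := dstar a₁ b₁) (x₂ := b₂) (y₂ := dstar a₂ b₂)
    P₁.hδ.le (by linarith [P₁.hε]) P₂.hδ.le (by linarith [P₂.hε]) hw₁ hw₂
  have B2 := H2_concave (x₁ := b₁ - dstar a₁ b₁) (y₁ := estar a₁ b₁)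
    (x₂ := b₂ - dstar a₂ b₂) (y₂ := estar a₂ b₂)
    P₁.hε (by linarith) P₂.hε (by linarith) hw₁ hw₂
  have B3 := H2_concave (x₁ := (a₁ + 1 - b₁) / 2) (y₁ := dstar a₁ b₁)
    (x₂ := (a₂ + 1 - b₂) / 2) (y₂ := dstar a₂ b₂)
    P₁.hδ.le (by linarith [P₁.hcδ]) P₂.hδ.le (by linarith [P₂.hcδ]) hw₁ hw₂
  have B4 := H2_concave (x₁ := (a₁ - 1 - b₁) / 2) (y₁ := estar a₁ b₁)
    (x₂ := (a₂ - 1 - b₂) / 2) (y₂ := estar a₂ b₂)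
    P₁.hε (by linarith [P₁.hdε]) P₂.hε (by linarith [P₂.hdε]) hw₁ hw₂
  -- assemble
  have hstep : w₁ * G (a₁, b₁) + w₂ * G (a₂, b₂) <
      fab (w₁ * a₁ + w₂ * a₂) (w₁ * b₁ + w₂ * b₂)
        (w₁ * dstar a₁ b₁ + w₂ * dstar a₂ b₂, w₁ * estar a₁ b₁ + w₂ * estar a₂ b₂) := by
    simp only [G]
    rw [fab_blocks, fab_blocks, fab_blocks]
    simp only
    rw [show (w₁ * b₁ + w₂ * b₂) - (w₁ * dstar a₁ b₁ + w₂ * dstar a₂ b₂)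
        = w₁ * (b₁ - dstar a₁ b₁) + w₂ * (b₂ - dstar a₂ b₂) from by ring]
    rw [show (w₁ * a₁ + w₂ * a₂ + 1 - (w₁ * b₁ + w₂ * b₂)) / 2
        = w₁ * ((a₁ + 1 - b₁) / 2) + w₂ * ((a₂ + 1 - b₂) / 2) from by
      rw [show w₂ = 1 - w₁ from by linarith]; ring]
    rw [show (w₁ * a₁ + w₂ * a₂ - 1 - (w₁ * b₁ + w₂ * b₂)) / 2
        = w₁ * ((a₁ - 1 - b₁) / 2) + w₂ * ((a₂ - 1 - b₂) / 2) from by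
      rw [show w₂ = 1 - w₁ from by linarith]; ring]
    rcases hcross with hc | hc | hc | hc
    · linarith [B1.2 hc, B2.1, B3.1, B4.1]
    · linarith [B1.1, B2.2 hc, B3.1, B4.1]
    · linarith [B1.1, B2.1, B3.2 hc, B4.1]
    · linarith [B1.1, B2.1, B3.1, B4.2 hc]
  calc w₁ * G (a₁, b₁) + w₂ * G (a₂, b₂) < _ := hstep
    _ ≤ G (w₁ * a₁ + w₂ * a₂, w₁ * b₁ + w₂ * b₂) := fab_le hbm habm hmem

lemma target_eq {p : ℝ × ℝ} (hb : 0 < p.2) (hab : 1 + p.2 ≤ p.1) :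
    p.1 * kappa p.1 p.2 = G p := by
  have ha : p.1 ≠ 0 := by
    have : (0:ℝ) < p.1 := by linarith
    exact ne_of_gt this
  rw [kappa, sSup_fab hb hab]
  simp only [G]
  field_simp

lemma G_formula : G = fun p : ℝ × ℝ =>
    (p.2 * Real.log p.2) - 2 * (dstar p.1 p.2 * Real.log (dstar p.1 p.2))
    + (((p.1 + 1 - p.2) / 2) * Real.log ((p.1 + 1 - p.2) / 2))
    - ((((p.1 + 1 - p.2) / 2) - dstar p.1 p.2) * Real.log (((p.1 + 1 - p.2) / 2) - dstar p.1 p.2))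
    - 2 * (estar p.1 p.2 * Real.log (estar p.1 p.2))
    - ((p.2 - dstar p.1 p.2 - estar p.1 p.2) * Real.log (p.2 - dstar p.1 p.2 - estar p.1 p.2))
    + (((p.1 - 1 - p.2) / 2) * Real.log ((p.1 - 1 - p.2) / 2))
    - ((((p.1 - 1 - p.2) / 2) - estar p.1 p.2) * Real.log (((p.1 - 1 - p.2) / 2) - estar p.1 p.2)) := by
  funext p
  simp only [G, fab]
  ring

lemma contG : ContinuousOn G {p : ℝ × ℝ | 0 < p.2 ∧ 1 + p.2 ≤ p.1} := by
  have hwc : Continuous fun p : ℝ × ℝ => Real.sqrt ((p.1 - p.2) ^ 2 + p.2 ^ 2 - 1) := by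
    apply Real.continuous_sqrt.comp
    fun_prop
  have hden : ∀ p ∈ {p : ℝ × ℝ | 0 < p.2 ∧ 1 + p.2 ≤ p.1},
      (p.1 - p.2) + Real.sqrt ((p.1 - p.2) ^ 2 + p.2 ^ 2 - 1) ≠ 0 := by
    intro p hp
    have h1 := Real.sqrt_nonneg ((p.1 - p.2) ^ 2 + p.2 ^ 2 - 1)
    have h2 := hp.1
    have h3 := hp.2
    have : (0:ℝ) < (p.1 - p.2) + Real.sqrt ((p.1 - p.2) ^ 2 + p.2 ^ 2 - 1) := by linarith
    exact ne_of_gt this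
  have hRc : ContinuousOn (fun p : ℝ × ℝ => Rab p.1 p.2)
      {p : ℝ × ℝ | 0 < p.2 ∧ 1 + p.2 ≤ p.1} := by
    simp only [Rab]
    exact ((continuous_snd.pow 2).continuousOn).div
      (((continuous_fst.sub continuous_snd).add hwc).continuousOn) hden
  have hcc : Continuous fun p : ℝ × ℝ => (p.1 + 1 - p.2) / 2 := by fun_prop
  have hdd : Continuous fun p : ℝ × ℝ => (p.1 - 1 - p.2) / 2 := by fun_prop
  have hdc : ContinuousOn (fun p : ℝ × ℝ => dstar p.1 p.2)
      {p : ℝ × ℝ | 0 < p.2 ∧ 1 + p.2 ≤ p.1} := by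
    simp only [dstar]
    apply ContinuousOn.div_const
    apply ContinuousOn.sub _ hRc
    apply Real.continuous_sqrt.comp_continuousOn
    exact (hRc.pow 2).add ((continuousOn_const.mul hcc.continuousOn).mul hRc)
  have hec : ContinuousOn (fun p : ℝ × ℝ => estar p.1 p.2)
      {p : ℝ × ℝ | 0 < p.2 ∧ 1 + p.2 ≤ p.1} := by
    simp only [estar]
    apply ContinuousOn.div_const
    apply ContinuousOn.sub _ hRc
    apply Real.continuous_sqrt.comp_continuousOn
    exact (hRc.pow 2).add ((continuousOn_const.mul hdd.continuousOn).mul hRc)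
  have hml : ∀ {f : ℝ × ℝ → ℝ}, ContinuousOn f {p : ℝ × ℝ | 0 < p.2 ∧ 1 + p.2 ≤ p.1} →
      ContinuousOn (fun p => f p * Real.log (f p)) {p : ℝ × ℝ | 0 < p.2 ∧ 1 + p.2 ≤ p.1} :=
    fun hf => Real.continuous_mul_log.comp_continuousOn hf
  rw [G_formula]
  exact ((((((((hml continuous_snd.continuousOn).sub
    (continuousOn_const.mul (hml hdc))).add
    (hml hcc.continuousOn)).sub
    (hml (hcc.continuousOn.sub hdc))).sub
    (continuousOn_const.mul (hml hec))).sub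
    (hml ((continuous_snd.continuousOn.sub hdc).sub hec))).add
    (hml hdd.continuousOn)).sub
    (hml (hdd.continuousOn.sub hec)))

lemma analyticAt_rlog {x : ℝ} (hx : 0 < x) : AnalyticAt ℝ Real.log x := by
  have h0 : AnalyticAt ℝ (fun y : ℝ => Complex.reCLM (Complex.log (Complex.ofRealCLM y))) x :=
    (Complex.reCLM.analyticAt _).comp
      (((analyticAt_clog (Complex.ofReal_mem_slitPlane.2 hx)).restrictScalars).comp
        (Complex.ofRealCLM.analyticAt x))
  have h1 : AnalyticAt ℝ (fun y : ℝ => (Complex.log (y : ℂ)).re) x := h0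
  apply h1.congr
  filter_upwards [eventually_gt_nhds hx] with y hy
  rw [← Complex.ofReal_log hy.le, Complex.ofReal_re]

lemma AnalyticAt.rlog' {f : ℝ × ℝ → ℝ} {z : ℝ × ℝ} (hf : AnalyticAt ℝ f z) (h : 0 < f z) :
    AnalyticAt ℝ (fun w => Real.log (f w)) z :=
  (analyticAt_rlog h).comp hf

lemma AnalyticAt.mullog {f : ℝ × ℝ → ℝ} {z : ℝ × ℝ} (hf : AnalyticAt ℝ f z) (h : 0 < f z) :
    AnalyticAt ℝ (fun w => f w * Real.log (f w)) z :=
  hf.mul (hf.rlog' h)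

lemma AnalyticAt.rsqrt {f : ℝ × ℝ → ℝ} {z : ℝ × ℝ} (hf : AnalyticAt ℝ f z) (h : 0 < f z) :
    AnalyticAt ℝ (fun w => Real.sqrt (f w)) z := by
  have h1 : AnalyticAt ℝ (fun w => Real.exp (Real.log (f w) / 2)) z :=
    ((hf.rlog' h).div analyticAt_const (by norm_num : (2:ℝ) ≠ 0)).rexp
  apply h1.congr
  have hev : ∀ᶠ w in nhds z, 0 < f w := hf.continuousAt (Ioi_mem_nhds h)
  filter_upwards [hev] with w hw
  rw [← Real.exp_log (Real.sqrt_pos.2 hw), Real.log_sqrt hw.le]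

set_option maxHeartbeats 1000000 in
lemma analyticG : AnalyticOnNhd ℝ G {p : ℝ × ℝ | 0 < p.2 ∧ 1 + p.2 < p.1} := by
  intro z hz
  have hzb : 0 < z.2 := hz.1
  have hza : 1 + z.2 < z.1 := hz.2
  have P := pf hzb hza.le
  have hfst : AnalyticAt ℝ (fun p : ℝ × ℝ => p.1) z := analyticAt_fst
  have hsnd : AnalyticAt ℝ (fun p : ℝ × ℝ => p.2) z := analyticAt_snd
  have hQA : AnalyticAt ℝ (fun p : ℝ × ℝ => (p.1 - p.2) ^ 2 + p.2 ^ 2 - 1) z :=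
    (((hfst.sub hsnd).pow 2).add (hsnd.pow 2)).sub analyticAt_const
  have hQpos : 0 < (z.1 - z.2) ^ 2 + z.2 ^ 2 - 1 := by nlinarith
  have hwA := hQA.rsqrt hQpos
  have hdenpos : 0 < (z.1 - z.2) + Real.sqrt ((z.1 - z.2) ^ 2 + z.2 ^ 2 - 1) := by
    have h1 := Real.sqrt_nonneg ((z.1 - z.2) ^ 2 + z.2 ^ 2 - 1)
    linarith
  have hRA : AnalyticAt ℝ (fun p : ℝ × ℝ => Rab p.1 p.2) z := by
    simp only [Rab]
    exact (hsnd.pow 2).div ((hfst.sub hsnd).add hwA) (ne_of_gt hdenpos)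
  have hcA : AnalyticAt ℝ (fun p : ℝ × ℝ => (p.1 + 1 - p.2) / 2) z :=
    ((hfst.add analyticAt_const).sub hsnd).div analyticAt_const (by norm_num : (2:ℝ) ≠ 0)
  have hdA : AnalyticAt ℝ (fun p : ℝ × ℝ => (p.1 - 1 - p.2) / 2) z :=
    ((hfst.sub analyticAt_const).sub hsnd).div analyticAt_const (by norm_num : (2:ℝ) ≠ 0)
  have hXA : AnalyticAt ℝ (fun p : ℝ × ℝ =>
      (Rab p.1 p.2) ^ 2 + 4 * ((p.1 + 1 - p.2) / 2) * Rab p.1 p.2) z :=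
    (hRA.pow 2).add ((analyticAt_const.mul hcA).mul hRA)
  have hYA : AnalyticAt ℝ (fun p : ℝ × ℝ =>
      (Rab p.1 p.2) ^ 2 + 4 * ((p.1 - 1 - p.2) / 2) * Rab p.1 p.2) z :=
    (hRA.pow 2).add ((analyticAt_const.mul hdA).mul hRA)
  have hcz : (0:ℝ) < (z.1 + 1 - z.2) / 2 := by linarith
  have hdz : (0:ℝ) < (z.1 - 1 - z.2) / 2 := by linarith
  have hXpos : 0 < (Rab z.1 z.2) ^ 2 + 4 * ((z.1 + 1 - z.2) / 2) * Rab z.1 z.2 := by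
    have h1 := P.hR
    positivity
  have hYpos : 0 < (Rab z.1 z.2) ^ 2 + 4 * ((z.1 - 1 - z.2) / 2) * Rab z.1 z.2 := by
    have h1 := P.hR
    positivity
  have hdstarA : AnalyticAt ℝ (fun p : ℝ × ℝ => dstar p.1 p.2) z := by
    simp only [dstar]
    exact ((hXA.rsqrt hXpos).sub hRA).div analyticAt_const (by norm_num : (2:ℝ) ≠ 0)
  have hestarA : AnalyticAt ℝ (fun p : ℝ × ℝ => estar p.1 p.2) z := by
    simp only [estar]
    exact ((hYA.rsqrt hYpos).sub hRA).div analyticAt_const (by norm_num : (2:ℝ) ≠ 0)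
  -- positivity of the various log arguments at z
  have hε : 0 < estar z.1 z.2 := P.hεiff.2 hdz
  have hdε : 0 < (z.1 - 1 - z.2) / 2 - estar z.1 z.2 := P.hdεpos hε
  have hu : 0 < z.2 - dstar z.1 z.2 - estar z.1 z.2 := by rw [P.hr]; exact P.hR
  rw [G_formula]
  exact ((((((((hsnd.mullog hzb).sub
    (analyticAt_const.mul (hdstarA.mullog P.hδ))).add
    (hcA.mullog hcz)).sub
    ((hcA.sub hdstarA).mullog P.hcδ)).sub
    (analyticAt_const.mul (hestarA.mullog hε))).sub
    (((hsnd.sub hdstarA).sub hestarA).mullog hu)).add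
    (hdA.mullog hdz)).sub
    ((hdA.sub hestarA).mullog hdε))

lemma convexS : Convex ℝ {p : ℝ × ℝ | 0 < p.2 ∧ 1 + p.2 ≤ p.1} := by
  intro x hx y hy w₁ w₂ hw₁ hw₂ hw
  simp only [Set.mem_setOf_eq, Prod.fst_add, Prod.snd_add, Prod.smul_fst, Prod.smul_snd,
    smul_eq_mul] at *
  constructor
  · rcases eq_or_lt_of_le hw₁ with h | h
    · rw [← h]
      have hw2 : w₂ = 1 := by linarith
      rw [hw2]
      simpa using hy.1
    · have h1 : 0 < w₁ * x.2 := mul_pos h hx.1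
      have h2 : 0 ≤ w₂ * y.2 := mul_nonneg hw₂ hy.1.le
      linarith
  · have h1 := mul_le_mul_of_nonneg_left hx.2 hw₁
    have h2 := mul_le_mul_of_nonneg_left hy.2 hw₂
    nlinarith

/-- `(a,b) ↦ a·κ(a,b)` is continuous and strictly concave on
`{(a,b) : b > 0, a ≥ 1+b}`, and real-analytic on the interior
`{(a,b) : b > 0, a > 1+b}`. -/
theorem stmt2 :
    ContinuousOn (fun p : ℝ × ℝ => p.1 * kappa p.1 p.2)
      {p : ℝ × ℝ | 0 < p.2 ∧ 1 + p.2 ≤ p.1} ∧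
    StrictConcaveOn ℝ {p : ℝ × ℝ | 0 < p.2 ∧ 1 + p.2 ≤ p.1}
      (fun p : ℝ × ℝ => p.1 * kappa p.1 p.2) ∧
    AnalyticOnNhd ℝ (fun p : ℝ × ℝ => p.1 * kappa p.1 p.2)
      {p : ℝ × ℝ | 0 < p.2 ∧ 1 + p.2 < p.1} := by
  refine ⟨?_, ⟨convexS, ?_⟩, ?_⟩
  · exact contG.congr (fun p hp => target_eq hp.1 hp.2)
  · intro x hx y hy hxy w₁ w₂ hw₁ hw₂ hw
    have hcS : w₁ • x + w₂ • y ∈ {p : ℝ × ℝ | 0 < p.2 ∧ 1 + p.2 ≤ p.1} :=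
      convexS hx hy hw₁.le hw₂.le hw
    simp only [smul_eq_mul]
    rw [target_eq hx.1 hx.2, target_eq hy.1 hy.2, target_eq hcS.1 hcS.2]
    have hpair : w₁ • x + w₂ • y = ((w₁ * x.1 + w₂ * y.1, w₁ * x.2 + w₂ * y.2) : ℝ × ℝ) := by
      ext <;> simp [Prod.smul_fst, Prod.smul_snd, smul_eq_mul]
    rw [hpair]
    have hne : ¬(x.1 = y.1 ∧ x.2 = y.2) := by
      rintro ⟨h1, h2⟩
      exact hxy (Prod.ext h1 h2)
    have := G_strict hx.1 hx.2 hy.1 hy.2 hne hw₁ hw₂ hw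
    simpa using this
  · intro z hz
    apply (analyticG z hz).congr
    have hopen : IsOpen {p : ℝ × ℝ | 0 < p.2 ∧ 1 + p.2 < p.1} := by
      rw [show {p : ℝ × ℝ | 0 < p.2 ∧ 1 + p.2 < p.1}
          = {p : ℝ × ℝ | 0 < p.2} ∩ {p : ℝ × ℝ | 1 + p.2 < p.1} from rfl]
      exact (isOpen_lt continuous_const continuous_snd).inter
        (isOpen_lt (continuous_const.add continuous_snd) continuous_fst)
    filter_upwards [hopen.mem_nhds hz] with p hp
    exact (target_eq hp.1 hp.2.le).symm
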